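/- In the tabular softmax trajectory model, fix logits z : 𝒮 × 𝒜 → ℝ, a direction v : 𝒮 × 𝒜 → ℝ, a nonempty event E ⊆ 𝒜^T, and any function f : 𝒜^T → ℝ. Then, as η → 0, E_{P_{z+ηv}}[f | E] = E_{P_z}[f | E] + η·Cov_{P_z(·|E)}(f, Ψ_{z,v}) + O(η²). -/

import Mathlib

open Finset Filter Asymptotics

noncomputable section

/-- Softmax policy: probability of action `a` in state `s` under logits `z`. -/
def pol {S A : Type*} [Fintype A] (z : S × A → ℝ) (s : S) (a : A) : ℝ :=
  Real.exp (z (s, a)) / ∑ b : A, Real.exp (z (s, b))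

/-- State reached after `n` steps of the deterministic dynamics `δ` from `s0`,
taking actions `y 0, y 1, …`. -/
def stateAt {S A : Type*} (δ : S → A → S) (s0 : S) (y : ℕ → A) : ℕ → S
  | 0 => s0
  | n + 1 => δ (stateAt δ s0 y n) (y n)

/-- State `s_t(y)` from which the `t`-th action of the trajectory `y` is taken. -/
def st {S A : Type*} (δ : S → A → S) (s0 : S) {T : ℕ} (y : Fin T → A) (t : Fin T) : S :=
  stateAt δ s0 (fun n => if h : n < T then y ⟨n, h⟩ else y t) t.val

/-- Trajectory probability `P_z(y) = ∏_t π_z(a_t | s_t(y))`. -/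
def traj {S A : Type*} [Fintype A] (δ : S → A → S) (s0 : S) {T : ℕ}
    (z : S × A → ℝ) (y : Fin T → A) : ℝ :=
  ∏ t : Fin T, pol z (st δ s0 y t) (y t)

/-- Per-token negative log-likelihood `ℓ_z(y)`. -/
def nll {S A : Type*} [Fintype A] (δ : S → A → S) (s0 : S) {T : ℕ}
    (z : S × A → ℝ) (y : Fin T → A) : ℝ :=
  -(1 / (T : ℝ)) * ∑ t : Fin T, Real.log (pol z (st δ s0 y t) (y t))

/-- Centered direction `ṽ_z(s,a) = v(s,a) − ∑_b π_z(b|s) v(s,b)`. -/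
def centered {S A : Type*} [Fintype A] (z v : S × A → ℝ) (s : S) (a : A) : ℝ :=
  v (s, a) - ∑ b : A, pol z s b * v (s, b)

/-- Trajectory score `Ψ_{z,v}(y) = ∑_t ṽ_z(s_t(y), a_t)`. -/
def score {S A : Type*} [Fintype A] (δ : S → A → S) (s0 : S) {T : ℕ}
    (z v : S × A → ℝ) (y : Fin T → A) : ℝ :=
  ∑ t : Fin T, centered z v (st δ s0 y t) (y t)

/-- Conditional expectation `E_{P_z}[f | E]`. -/
def condExp {S A : Type*} [Fintype A] (δ : S → A → S) (s0 : S) {T : ℕ}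
    (z : S × A → ℝ) (E : Finset (Fin T → A)) (f : (Fin T → A) → ℝ) : ℝ :=
  (∑ y ∈ E, traj δ s0 z y * f y) / ∑ y ∈ E, traj δ s0 z y

/-- Conditional covariance `Cov_{P_z(·|E)}(f, g)`. -/
def condCov {S A : Type*} [Fintype A] (δ : S → A → S) (s0 : S) {T : ℕ}
    (z : S × A → ℝ) (E : Finset (Fin T → A)) (f g : (Fin T → A) → ℝ) : ℝ :=
  condExp δ s0 z E (fun y => f y * g y) - condExp δ s0 z E f * condExp δ s0 z E g

/-
Along the line `z + η • v` the softmax policy has logarithmic derivative `ṽ_z` at `η = 0`, so each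
trajectory weight `P_{z+ηv}(y)` has derivative `P_z(y) Ψ_{z,v}(y)`, and the quotient rule turns the
derivative of the conditional mean `E_{P_{z+ηv}}[f | E]` into `Cov_{P_z(·|E)}(f, Ψ_{z,v})`. The
conditional mean is a smooth function of `η`, so its first-order Taylor expansion has an `O(η²)`
remainder.
-/

open scoped Topology in
theorem ContDiff.isBigO_sub_linearization {E : Type*} [NormedAddCommGroup E] [NormedSpace ℝ E]
    {g : ℝ → E} (hg : ContDiff ℝ 2 g) (x₀ : ℝ) :
    (fun x => g x - (g x₀ + (x - x₀) • deriv g x₀)) =O[𝓝 x₀] fun x => (x - x₀) ^ 2 := by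
  set c : E := (2 : ℝ)⁻¹ • iteratedDeriv 2 g x₀
  have hquad : ∀ x, taylorWithinEval g 2 Set.univ x₀ x - (g x₀ + (x - x₀) • deriv g x₀)
      = (x - x₀) ^ 2 • c := fun x => by
    norm_num [c, taylor_within_apply, iteratedDerivWithin_univ, smul_smul, mul_comm]
  have hc : (fun x => (x - x₀) ^ 2 • c) =O[𝓝 x₀] fun x => (x - x₀) ^ 2 :=
    isBigO_of_le' (c := ‖c‖) _ fun x => by rw [norm_smul, mul_comm]
  refine ((taylor_isLittleO_univ hg).isBigO.add hc).congr_left fun x => ?_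
  rw [← hquad]
  abel

theorem hasDerivAt_finsetProd_of_logDeriv {ι : Type*} (u : Finset ι) {f : ι → ℝ → ℝ}
    {c : ι → ℝ} {x : ℝ} (hf : ∀ i ∈ u, HasDerivAt (f i) (f i x * c i) x) :
    HasDerivAt (fun y => ∏ i ∈ u, f i y) ((∏ i ∈ u, f i x) * ∑ i ∈ u, c i) x := by
  classical
  refine (HasDerivAt.fun_finsetProd hf).congr_deriv ?_
  rw [Finset.mul_sum]
  refine Finset.sum_congr rfl fun i hi => ?_
  rw [smul_eq_mul, ← mul_assoc, Finset.prod_erase_mul u _ hi]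

section SoftmaxModel

variable {S A : Type*} [Fintype A] [Nonempty A]

lemma sum_exp_pos (z : S × A → ℝ) (s : S) : 0 < ∑ b : A, Real.exp (z (s, b)) :=
  Finset.sum_pos (fun _ _ => Real.exp_pos _) Finset.univ_nonempty

lemma pol_pos (z : S × A → ℝ) (s : S) (a : A) : 0 < pol z s a :=
  div_pos (Real.exp_pos _) (sum_exp_pos z s)

lemma traj_pos (δ : S → A → S) (s0 : S) {T : ℕ} (z : S × A → ℝ) (y : Fin T → A) :
    0 < traj δ s0 z y :=
  Finset.prod_pos fun _ _ => pol_pos _ _ _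

lemma sum_traj_pos (δ : S → A → S) (s0 : S) {T : ℕ} (z : S × A → ℝ)
    {E : Finset (Fin T → A)} (hE : E.Nonempty) : 0 < ∑ y ∈ E, traj δ s0 z y :=
  Finset.sum_pos (fun _ _ => traj_pos _ _ _ _) hE

lemma contDiff_pol_add_smul {n : WithTop ℕ∞} (z v : S × A → ℝ) (s : S) (a : A) :
    ContDiff ℝ n (fun η : ℝ => pol (z + η • v) s a) :=
  have hexp : ∀ b, ContDiff ℝ n fun η : ℝ => Real.exp ((z + η • v) (s, b)) := fun _ => by
    simp only [Pi.add_apply, Pi.smul_apply, smul_eq_mul]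
    fun_prop
  (hexp a).div (ContDiff.sum fun b _ => hexp b) fun η => (sum_exp_pos (z + η • v) s).ne'

lemma hasDerivAt_pol_add_smul (z v : S × A → ℝ) (s : S) (a : A) :
    HasDerivAt (fun η : ℝ => pol (z + η • v) s a) (pol z s a * centered z v s a) 0 := by
  have hexp : ∀ b, HasDerivAt (fun η : ℝ => Real.exp ((z + η • v) (s, b)))
      (Real.exp (z (s, b)) * v (s, b)) 0 := fun b => by
    simpa using (((hasDerivAt_id (0 : ℝ)).mul_const (v (s, b))).const_add (z (s, b))).exp
  have hZ := sum_exp_pos z s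
  refine ((hexp a).div (HasDerivAt.fun_sum fun b _ => hexp b) ?_).congr_deriv ?_
  · simpa using hZ.ne'
  · simp only [zero_smul, add_zero, centered, pol, div_mul_eq_mul_div, ← Finset.sum_div]
    field_simp

lemma contDiff_traj_add_smul {n : WithTop ℕ∞} (δ : S → A → S) (s0 : S) {T : ℕ}
    (z v : S × A → ℝ) (y : Fin T → A) :
    ContDiff ℝ n (fun η : ℝ => traj δ s0 (z + η • v) y) :=
  contDiff_prod fun _ _ => contDiff_pol_add_smul z v _ _

lemma hasDerivAt_traj_add_smul (δ : S → A → S) (s0 : S) {T : ℕ} (z v : S × A → ℝ)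
    (y : Fin T → A) :
    HasDerivAt (fun η : ℝ => traj δ s0 (z + η • v) y) (traj δ s0 z y * score δ s0 z v y) 0 := by
  simpa [traj, score] using hasDerivAt_finsetProd_of_logDeriv Finset.univ
    (f := fun t η => pol (z + η • v) (st δ s0 y t) (y t)) (x := 0)
    (c := fun t => centered z v (st δ s0 y t) (y t))
    fun t _ => by simpa using hasDerivAt_pol_add_smul z v (st δ s0 y t) (y t)

lemma contDiff_condExp_add_smul {n : WithTop ℕ∞} (δ : S → A → S) (s0 : S) {T : ℕ}
    (z v : S × A → ℝ) {E : Finset (Fin T → A)} (hE : E.Nonempty) (f : (Fin T → A) → ℝ) :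
    ContDiff ℝ n (fun η : ℝ => condExp δ s0 (z + η • v) E f) :=
  (ContDiff.sum fun y _ => (contDiff_traj_add_smul δ s0 z v y).mul contDiff_const).div
    (ContDiff.sum fun y _ => contDiff_traj_add_smul δ s0 z v y)
    fun η => (sum_traj_pos δ s0 (z + η • v) hE).ne'

theorem hasDerivAt_condExp_add_smul (δ : S → A → S) (s0 : S) {T : ℕ} (z v : S × A → ℝ)
    {E : Finset (Fin T → A)} (hE : E.Nonempty) (f : (Fin T → A) → ℝ) :
    HasDerivAt (fun η : ℝ => condExp δ s0 (z + η • v) E f)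
      (condCov δ s0 z E f (score δ s0 z v)) 0 := by
  have hZ := sum_traj_pos δ s0 z hE
  have hnum := HasDerivAt.fun_sum fun y (_ : y ∈ E) =>
    (hasDerivAt_traj_add_smul δ s0 z v y).mul_const (f y)
  have hden := HasDerivAt.fun_sum fun y (_ : y ∈ E) => hasDerivAt_traj_add_smul δ s0 z v y
  refine (hnum.div hden ?_).congr_deriv ?_
  · simpa using hZ.ne'
  · simp only [zero_smul, add_zero, condCov, condExp, mul_right_comm _ (score δ s0 z v _),
      mul_assoc]
    field_simp

end SoftmaxModel

theorem stmt_8_general {S A : Type*} [Fintype A] [Nonempty A]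
    (δ : S → A → S) (s0 : S) (T : ℕ)
    (z v : S × A → ℝ) (E : Finset (Fin T → A)) (hE : E.Nonempty)
    (f : (Fin T → A) → ℝ) :
    (fun η : ℝ => condExp δ s0 (z + η • v) E f
        - (condExp δ s0 z E f + η * condCov δ s0 z E f (score δ s0 z v)))
      =O[nhds (0 : ℝ)] (fun η : ℝ => η ^ 2) := by
  have h := (contDiff_condExp_add_smul δ s0 z v hE f (n := 2)).isBigO_sub_linearization 0
  rw [(hasDerivAt_condExp_add_smul δ s0 z v hE f).deriv] at h
  simpa using h

/-- Term (B): as `η → 0`,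
`E_{P_{z+ηv}}[f | E] = E_{P_z}[f | E] + η·Cov_{P_z(·|E)}(f, Ψ_{z,v}) + O(η²)`. -/
theorem stmt_8 {S A : Type*} [Fintype S] [Fintype A] [Nonempty A]
    (δ : S → A → S) (s0 : S) (T : ℕ) (hT : 1 ≤ T)
    (z v : S × A → ℝ) (E : Finset (Fin T → A)) (hE : E.Nonempty)
    (f : (Fin T → A) → ℝ) :
    (fun η : ℝ => condExp δ s0 (z + η • v) E f
        - (condExp δ s0 z E f + η * condCov δ s0 z E f (score δ s0 z v)))
      =O[nhds (0 : ℝ)] (fun η : ℝ => η ^ 2) :=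
  stmt_8_general δ s0 T z v E hE f
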